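/- Consider the single-node general discrete model over horizon n. The optimal expected total payoff, i.e., the supremum of P(F) over all admissible policies F, equals γ_1^0. -/

import Mathlib

/-!
Backward induction. For an admissible policy `F`, the Bellman gap at slot `k` is how far
`log (1 + F_k h_k) + γ_{k+1}^{c_k}` falls short of its maximum `α_{k+1}^{U_k}(h_k)` over all
feasible amounts; it is nonnegative, and it vanishes for a greedy policy. The carry `c_{k-1}` is
a function of the history, which is independent of the fresh pair `(E_k, h_k)`, so the defining
recursion of `γ` gives `E[α_{k+1}^{U_k}(h_k)] = E[γ_k^{c_{k-1}}]`. Hence the expected payoff of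
slot `k` plus its expected gap is `E[γ_k^{c_{k-1}}] - E[γ_{k+1}^{c_k}]`, and summing over the
slots telescopes to `P(F) + ∑_k E[gap_k] = γ_1^0`. A greedy policy exists as a measurable argmax
selection, so `γ_1^0` is attained.
-/

open MeasureTheory ProbabilityTheory

namespace EHDiscrete

variable {Ω : Type*} [MeasurableSpace Ω]

/-- Carryover energy: `c 0 = 0`, `c k = min (c (k-1) + E k) B - F k`. -/
def carry (B : ℕ) (Earr F : ℕ → Ω → ℕ) : ℕ → Ω → ℕ
  | 0 => fun _ => 0
  | k + 1 => fun ω => min (carry B Earr F k ω + Earr (k + 1) ω) B - F (k + 1) ω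

/-- Available energy `U_k = min (c_{k-1} + E_k) B`. -/
def avail (B : ℕ) (Earr F : ℕ → Ω → ℕ) (k : ℕ) (ω : Ω) : ℕ :=
  min (carry B Earr F (k - 1) ω + Earr k ω) B

/-- The σ-algebra generated by the history `(E_1, …, E_k, h_1, …, h_k)`. -/
def hist (Earr : ℕ → Ω → ℕ) (h : ℕ → Ω → ℝ) (k : ℕ) : MeasurableSpace Ω :=
  MeasurableSpace.comap
    (fun ω => ((fun i : Fin k => Earr (i.1 + 1) ω), (fun i : Fin k => h (i.1 + 1) ω)))
    inferInstance

/-- Admissible policy (general discrete consumption): `F_k ≤ U_k`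
(hence `F_k ∈ {0, …, B}`), and `F_k` is a measurable function of
`(E_1, …, E_k, h_1, …, h_k)`. -/
def IsPolicy (n B : ℕ) (Earr : ℕ → Ω → ℕ) (h : ℕ → Ω → ℝ) (F : ℕ → Ω → ℕ) : Prop :=
  (∀ k, 1 ≤ k → k ≤ n → ∀ ω, F k ω ≤ avail B Earr F k ω) ∧
  (∀ k, 1 ≤ k → k ≤ n → Measurable[hist Earr h k] (F k))

/-- Expected total payoff `P(F) = E [∑_{k=1}^n log (1 + F_k h_k)]`. -/
noncomputable def payoff (μ : Measure Ω) (n : ℕ) (h : ℕ → Ω → ℝ) (F : ℕ → Ω → ℕ) : ℝ :=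
  ∫ ω, ∑ k ∈ Finset.Icc 1 n, Real.log (1 + (F k ω : ℝ) * h k ω) ∂μ

/-- `α^m(x) = max_{j ∈ {0, …, m}} (log (1 + j·x) + g (m - j))`. -/
noncomputable def alphaD (g : ℕ → ℝ) (m : ℕ) (x : ℝ) : ℝ :=
  (Finset.range (m + 1)).sup' (Finset.nonempty_range_iff.mpr (Nat.succ_ne_zero m))
    (fun j => Real.log (1 + (j : ℝ) * x) + g (m - j))

/-- Values, indexed backwards: `gAuxD φ B pr j m = γ_{n-j}^m`, where
`γ_n^m = E[log (1 + h·min (m + E) B)]` and, for `k < n`,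
`γ_k^m = ∑_{i=0}^{B-m-1} p_i E[α_{k+1}^{i+m}] + (∑_{i=B-m}^B p_i) E[α_{k+1}^B]`. -/
noncomputable def gAuxD (φ : Measure ℝ) (B : ℕ) (pr : ℕ → ℝ) : ℕ → ℕ → ℝ
  | 0, m => ∑ i ∈ Finset.range (B + 1),
      pr i * ∫ x, Real.log (1 + x * ((min (m + i) B : ℕ) : ℝ)) ∂φ
  | j + 1, m =>
      (∑ i ∈ Finset.range (B - m),
        pr i * ∫ x, alphaD (fun l => gAuxD φ B pr j l) (i + m) x ∂φ)
        + (∑ i ∈ Finset.Icc (B - m) B, pr i)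
          * ∫ x, alphaD (fun l => gAuxD φ B pr j l) B x ∂φ

/-- `γ_k^m` for slots `1 ≤ k ≤ n`, with the convention `γ_k^m = 0` for `k > n`. -/
noncomputable def gammaSlotD (n : ℕ) (φ : Measure ℝ) (B : ℕ) (pr : ℕ → ℝ) (k m : ℕ) : ℝ :=
  if k ≤ n then gAuxD φ B pr (n - k) m else 0

/-- A policy is greedy if, at each slot, the transmitted amount attains the
maximum of `log (1 + j·h_k) + γ_{k+1}^{U_k - j}` over `j ∈ {0, …, U_k}`. -/
def IsGreedy (n B : ℕ) (φ : Measure ℝ) (pr : ℕ → ℝ) (Earr : ℕ → Ω → ℕ)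
    (h : ℕ → Ω → ℝ) (F : ℕ → Ω → ℕ) : Prop :=
  ∀ k, 1 ≤ k → k ≤ n → ∀ ω, ∀ j ≤ avail B Earr F k ω,
    Real.log (1 + (j : ℝ) * h k ω) + gammaSlotD n φ B pr (k + 1) (avail B Earr F k ω - j)
      ≤ Real.log (1 + (F k ω : ℝ) * h k ω)
        + gammaSlotD n φ B pr (k + 1) (avail B Earr F k ω - F k ω)

lemma le_alphaD (g : ℕ → ℝ) {m j : ℕ} (hj : j ≤ m) (x : ℝ) :
    Real.log (1 + j * x) + g (m - j) ≤ alphaD g m x :=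
  Finset.le_sup' (fun j : ℕ => Real.log (1 + j * x) + g (m - j))
    (Finset.mem_range_succ_iff.mpr hj)

lemma alphaD_le (g : ℕ → ℝ) (m : ℕ) (x : ℝ) {c : ℝ}
    (hc : ∀ j ≤ m, Real.log (1 + j * x) + g (m - j) ≤ c) : alphaD g m x ≤ c :=
  Finset.sup'_le _ _ fun j hj => hc j (Finset.mem_range_succ_iff.mp hj)

lemma alphaD_eq_sup' (g : ℕ → ℝ) (m : ℕ) :
    alphaD g m = (Finset.range (m + 1)).sup' Finset.nonempty_range_add_one
      fun j x => Real.log (1 + j * x) + g (m - j) := by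
  ext x
  simp only [alphaD, Finset.sup'_apply]

lemma measurable_alphaD (g : ℕ → ℝ) (m : ℕ) : Measurable (alphaD g m) := by
  rw [alphaD_eq_sup']
  exact Finset.measurable_sup' _ fun j _ => by fun_prop

lemma log_one_add_mul_nonneg {x : ℝ} (hx : 0 ≤ x) (j : ℕ) : 0 ≤ Real.log (1 + j * x) :=
  Real.log_nonneg (le_add_of_nonneg_right (by positivity))

lemma log_one_add_mul_mono {x : ℝ} (hx : 0 ≤ x) {j m : ℕ} (hjm : j ≤ m) :
    Real.log (1 + j * x) ≤ Real.log (1 + m * x) :=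
  Real.log_le_log (by positivity) (by gcongr)

lemma alphaD_zero {x : ℝ} (hx : 0 ≤ x) (m : ℕ) : alphaD 0 m x = Real.log (1 + m * x) :=
  le_antisymm (alphaD_le _ _ _ fun j hj => by simpa using log_one_add_mul_mono hx hj)
    (by simpa using le_alphaD 0 le_rfl x)

section Integrability

variable {φ : Measure ℝ} {B : ℕ}

lemma integrable_log_one_add_mul (hφ : ∀ᵐ x ∂φ, 0 ≤ x)
    (hint : Integrable (fun x => Real.log (1 + B * x)) φ) {j : ℕ} (hj : j ≤ B) :
    Integrable (fun x => Real.log (1 + j * x)) φ := by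
  refine hint.mono (by fun_prop : Measurable _).aestronglyMeasurable ?_
  filter_upwards [hφ] with x hx
  rw [Real.norm_of_nonneg (log_one_add_mul_nonneg hx j),
    Real.norm_of_nonneg (log_one_add_mul_nonneg hx B)]
  exact log_one_add_mul_mono hx hj

lemma integrable_alphaD [IsFiniteMeasure φ] (hφ : ∀ᵐ x ∂φ, 0 ≤ x)
    (hint : Integrable (fun x => Real.log (1 + B * x)) φ) (g : ℕ → ℝ) {m : ℕ} (hm : m ≤ B) :
    Integrable (alphaD g m) φ := by
  rw [alphaD_eq_sup']
  refine Finset.sup'_induction (p := fun f => Integrable f φ) _ _ (fun _ h₁ _ h₂ => h₁.sup h₂)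
    fun j hj => ?_
  exact (integrable_log_one_add_mul hφ hint ((Finset.mem_range_succ_iff.mp hj).trans hm)).add
    (integrable_const _)

end Integrability

lemma exists_bestChoice (g : ℕ → ℝ) (u : ℕ) (x : ℝ) : ∃ j, j ≤ u ∧ ∀ i ≤ u,
    Real.log (1 + i * x) + g (u - i) ≤ Real.log (1 + j * x) + g (u - j) := by
  obtain ⟨j, hj, hmax⟩ := (Finset.range (u + 1)).exists_max_image
    (fun j : ℕ => Real.log (1 + j * x) + g (u - j)) Finset.nonempty_range_add_one
  exact ⟨j, Finset.mem_range_succ_iff.mp hj,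
    fun i hi => hmax i (Finset.mem_range_succ_iff.mpr hi)⟩

open Classical in
noncomputable def bestChoice (g : ℕ → ℝ) (p : ℕ × ℝ) : ℕ :=
  Nat.find (exists_bestChoice g p.1 p.2)

lemma bestChoice_le (g : ℕ → ℝ) (p : ℕ × ℝ) : bestChoice g p ≤ p.1 :=
  (Nat.find_spec (exists_bestChoice g p.1 p.2)).1

lemma bestChoice_max (g : ℕ → ℝ) (p : ℕ × ℝ) : ∀ i ≤ p.1,
    Real.log (1 + i * p.2) + g (p.1 - i)
      ≤ Real.log (1 + bestChoice g p * p.2) + g (p.1 - bestChoice g p) :=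
  (Nat.find_spec (exists_bestChoice g p.1 p.2)).2

lemma measurable_bestChoice (g : ℕ → ℝ) : Measurable (bestChoice g) := by
  classical
  refine measurable_find _ fun j => ?_
  measurability

def history (Earr : ℕ → Ω → ℕ) (h : ℕ → Ω → ℝ) (k : ℕ) (ω : Ω) :
    (Fin k → ℕ) × (Fin k → ℝ) :=
  (fun i => Earr (i.1 + 1) ω, fun i => h (i.1 + 1) ω)

section History

variable {Earr : ℕ → Ω → ℕ} {h : ℕ → Ω → ℝ}

section

omit [MeasurableSpace Ω]

lemma hist_eq_comap (k : ℕ) :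
    hist Earr h k = MeasurableSpace.comap (history Earr h k) inferInstance := rfl

lemma measurable_earr_hist {j k : ℕ} (hj : 1 ≤ j) (hjk : j ≤ k) :
    Measurable[hist Earr h k] (Earr j) := by
  obtain ⟨i, rfl⟩ : ∃ i, j = i + 1 := ⟨j - 1, by omega⟩
  exact ((measurable_pi_apply (⟨i, hjk⟩ : Fin k) : Measurable fun f : Fin k → ℕ => f _).comp
    measurable_fst).comp (comap_measurable (history Earr h k))

lemma measurable_h_hist {j k : ℕ} (hj : 1 ≤ j) (hjk : j ≤ k) :
    Measurable[hist Earr h k] (h j) := by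
  obtain ⟨i, rfl⟩ : ∃ i, j = i + 1 := ⟨j - 1, by omega⟩
  exact ((measurable_pi_apply (⟨i, hjk⟩ : Fin k) : Measurable fun f : Fin k → ℝ => f _).comp
    measurable_snd).comp (comap_measurable (history Earr h k))

lemma hist_mono {j k : ℕ} (hjk : j ≤ k) : hist Earr h j ≤ hist Earr h k := by
  let restrict : (Fin k → ℕ) × (Fin k → ℝ) → (Fin j → ℕ) × (Fin j → ℝ) := fun p =>
    (fun i => p.1 ⟨i, i.2.trans_le hjk⟩, fun i => p.2 ⟨i, i.2.trans_le hjk⟩)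
  have : history Earr h j = restrict ∘ history Earr h k := rfl
  rw [hist_eq_comap, hist_eq_comap, this, ← MeasurableSpace.comap_comp]
  exact MeasurableSpace.comap_mono (Measurable.comap_le (by fun_prop))

lemma measurable_min_add_earr_hist {B k : ℕ} {c : Ω → ℕ} (hc : Measurable[hist Earr h k] c) :
    Measurable[hist Earr h (k + 1)] fun ω => min (c ω + Earr (k + 1) ω) B :=
  ((hc.mono (hist_mono k.le_succ) le_rfl).add (measurable_earr_hist le_add_self le_rfl)).min
    measurable_const

lemma carry_le (B : ℕ) (F : ℕ → Ω → ℕ) : ∀ k ω, carry B Earr F k ω ≤ B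
  | 0, _ => Nat.zero_le _
  | _ + 1, _ => (Nat.sub_le _ _).trans (min_le_right _ _)

lemma measurable_carry_hist {n B : ℕ} {F : ℕ → Ω → ℕ}
    (hF : ∀ k, 1 ≤ k → k ≤ n → Measurable[hist Earr h k] (F k)) :
    ∀ k ≤ n, Measurable[hist Earr h k] (carry B Earr F k)
  | 0, _ => measurable_const
  | k + 1, hk => (measurable_min_add_earr_hist (measurable_carry_hist hF k (by omega))).sub
      (hF (k + 1) le_add_self hk)

end

lemma hist_le (hEm : ∀ k, Measurable (Earr k)) (hhm : ∀ k, Measurable (h k)) (k : ℕ) :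
    hist Earr h k ≤ ‹MeasurableSpace Ω› :=
  ((measurable_pi_lambda _ fun _ => hEm _).prodMk (measurable_pi_lambda _ fun _ => hhm _)).comap_le

lemma indepFun_history_slot {μ : Measure Ω} {n : ℕ} (hEm : ∀ k, Measurable (Earr k))
    (hhm : ∀ k, Measurable (h k))
    (hindep : iIndepFun (m := fun _ : Fin n => (inferInstance : MeasurableSpace (ℕ × ℝ)))
      (fun k ω => (Earr (k.1 + 1) ω, h (k.1 + 1) ω)) μ) {k : ℕ} (hk : k < n) :
    IndepFun (history Earr h k) (fun ω => (Earr (k + 1) ω, h (k + 1) ω)) μ := by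
  let S := Finset.univ.filter fun j : Fin n => j.1 < k
  have hS : ∀ i : Fin k, (⟨i.1, i.2.trans hk⟩ : Fin n) ∈ S := fun i => by simp [S]
  have hT : (⟨k, hk⟩ : Fin n) ∈ ({⟨k, hk⟩} : Finset (Fin n)) := Finset.mem_singleton_self _
  exact (hindep.indepFun_finset S {⟨k, hk⟩} (by simp [S]) fun i => (hEm _).prodMk (hhm _)).comp
    (φ := fun t => (fun i => (t ⟨_, hS i⟩).1, fun i => (t ⟨_, hS i⟩).2))
    (ψ := fun t => t ⟨_, hT⟩) (by fun_prop) (measurable_pi_apply (X := fun _ => ℕ × ℝ) _)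

end History

section Decomposition

variable {μ : Measure Ω} {φ : Measure ℝ} {B : ℕ} {X : Ω → ℕ}

omit [MeasurableSpace Ω] in
lemma comp_eq_sum_indicator (hXB : ∀ ω, X ω ≤ B) (G : ℕ → Ω → ℝ) (ω : Ω) :
    G (X ω) ω = ∑ m ∈ Finset.range (B + 1), {ω' | X ω' = m}.indicator (G m) ω := by
  rw [Finset.sum_eq_single_of_mem (X ω) (Finset.mem_range_succ_iff.mpr (hXB ω))]
  · exact (Set.indicator_of_mem (s := {ω' | X ω' = X ω}) rfl (G (X ω))).symm
  · exact fun m _ hm => Set.indicator_of_notMem (fun h => hm h.symm) _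

lemma integrable_comp_of_le (hX : Measurable X) (hXB : ∀ ω, X ω ≤ B) {G : ℕ → Ω → ℝ}
    (hG : ∀ m ≤ B, Integrable (G m) μ) : Integrable (fun ω => G (X ω) ω) μ := by
  simp_rw [comp_eq_sum_indicator hXB G]
  exact integrable_finsetSum _ fun m hm =>
    (hG m (Finset.mem_range_succ_iff.mp hm)).indicator (hX (measurableSet_singleton m))

lemma integral_comp_eq_sum_setIntegral (hX : Measurable X) (hXB : ∀ ω, X ω ≤ B)
    {G : ℕ → Ω → ℝ} (hG : ∀ m ≤ B, Integrable (G m) μ) :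
    ∫ ω, G (X ω) ω ∂μ = ∑ m ∈ Finset.range (B + 1), ∫ ω in {ω | X ω = m}, G m ω ∂μ := by
  have hind : ∀ m ∈ Finset.range (B + 1), Integrable ({ω | X ω = m}.indicator (G m)) μ :=
    fun m hm => (hG m (Finset.mem_range_succ_iff.mp hm)).indicator (hX (measurableSet_singleton m))
  simp_rw [comp_eq_sum_indicator hXB G]
  rw [integral_finsetSum _ hind]
  exact Finset.sum_congr rfl fun m _ => integral_indicator (hX (measurableSet_singleton m))

lemma integral_comp_of_indepFun {Z : Ω → ℝ} {pr : ℕ → ℝ}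
    (hX : Measurable X) (hZ : Measurable Z) (hXB : ∀ ω, X ω ≤ B) (hXZ : IndepFun X Z μ)
    (hlaw : μ.map Z = φ) (hpr : ∀ i ≤ B, μ.real {ω | X ω = i} = pr i)
    {G : ℕ → ℝ → ℝ} (hG : ∀ i, Measurable (G i)) (hGint : ∀ i ≤ B, Integrable (G i) φ) :
    ∫ ω, G (X ω) (Z ω) ∂μ = ∑ i ∈ Finset.range (B + 1), pr i * ∫ x, G i x ∂φ := by
  subst hlaw
  have hGZ : ∀ i ≤ B, Integrable (fun ω => G i (Z ω)) μ := fun i hi =>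
    (hGint i hi).comp_measurable hZ
  rw [integral_comp_eq_sum_setIntegral (G := fun i ω => G i (Z ω)) hX hXB hGZ]
  refine Finset.sum_congr rfl fun i hi => ?_
  rw [((IndepFun_iff_Indep _ _ _).mp hXZ).setIntegral_eq_mul (A := {ω | X ω = i}) hX.comap_le
      hZ.aemeasurable ⟨{i}, measurableSet_singleton i, rfl⟩ (hG i).aestronglyMeasurable,
    hpr i (Finset.mem_range_succ_iff.mp hi),
    integral_map hZ.aemeasurable (hG i).aestronglyMeasurable]

lemma integrable_log_one_add_mul_comp {X : Ω → ℕ} {Z : Ω → ℝ} (hX : Measurable X)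
    (hXB : ∀ ω, X ω ≤ B) (hZ : Measurable Z) (hlaw : μ.map Z = φ) (hφ : ∀ᵐ x ∂φ, 0 ≤ x)
    (hint : Integrable (fun x => Real.log (1 + B * x)) φ) :
    Integrable (fun ω => Real.log (1 + X ω * Z ω)) μ :=
  integrable_comp_of_le (G := fun j ω => Real.log (1 + j * Z ω)) hX hXB fun _ hj =>
    (hlaw ▸ integrable_log_one_add_mul hφ hint hj).comp_measurable hZ

end Decomposition

lemma integral_comp_history_slot {μ : Measure Ω} [IsFiniteMeasure μ] {n B : ℕ} {pr : ℕ → ℝ}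
    {φ : Measure ℝ} {Earr : ℕ → Ω → ℕ} {h : ℕ → Ω → ℝ}
    (hEm : ∀ k, Measurable (Earr k)) (hhm : ∀ k, Measurable (h k))
    (hindep : iIndepFun (m := fun _ : Fin n => (inferInstance : MeasurableSpace (ℕ × ℝ)))
      (fun k ω => (Earr (k.1 + 1) ω, h (k.1 + 1) ω)) μ) {k : ℕ} (hk : k < n)
    (hEB : ∀ ω, Earr (k + 1) ω ≤ B) (hlaw : μ.map (h (k + 1)) = φ)
    (hpair : IndepFun (Earr (k + 1)) (h (k + 1)) μ)
    (hpr : ∀ i ≤ B, μ.real {ω | Earr (k + 1) ω = i} = pr i)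
    {Y : Ω → ℕ} (hY : Measurable[hist Earr h k] Y) (hYB : ∀ ω, Y ω ≤ B)
    {G : ℕ → ℕ → ℝ → ℝ} (hG : ∀ m i, Measurable (G m i)) (hGint : ∀ m i, Integrable (G m i) φ) :
    ∫ ω, G (Y ω) (Earr (k + 1) ω) (h (k + 1) ω) ∂μ
      = ∫ ω, ∑ i ∈ Finset.range (B + 1), pr i * ∫ x, G (Y ω) i x ∂φ ∂μ := by
  have hY' : Measurable Y := hY.mono (hist_le hEm hhm k) le_rfl
  have hslot : ∀ m, Integrable (fun ω => G m (Earr (k + 1) ω) (h (k + 1) ω)) μ := fun m =>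
    integrable_comp_of_le (G := fun i ω => G m i (h (k + 1) ω)) (hEm _) hEB fun i _ =>
      (hlaw ▸ hGint m i).comp_measurable (hhm _)
  rw [integral_comp_eq_sum_setIntegral (G := fun m ω => G m (Earr (k + 1) ω) (h (k + 1) ω))
      hY' hYB fun m _ => hslot m,
    integral_comp_eq_sum_setIntegral (G := fun m _ => ∑ i ∈ Finset.range (B + 1),
      pr i * ∫ x, G m i x ∂φ) hY' hYB fun m _ => integrable_const _]
  refine Finset.sum_congr rfl fun m _ => ?_
  rw [setIntegral_const, smul_eq_mul, ← integral_comp_of_indepFun (hEm _) (hhm _) hEB hpair hlaw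
    hpr (hG m) fun i _ => hGint m i]
  exact ((IndepFun_iff_Indep _ _ _).mp (indepFun_history_slot hEm hhm hindep hk)).setIntegral_eq_mul
    (f := fun p : ℕ × ℝ => G m p.1 p.2) (hist_le hEm hhm k) ((hEm _).prodMk (hhm _)).aemeasurable
    (hY (measurableSet_singleton m))
    (measurable_from_prod_countable_right fun i => hG m i).aestronglyMeasurable

section Values

variable {φ : Measure ℝ} {B : ℕ} {pr : ℕ → ℝ}

lemma gAuxD_succ (j : ℕ) {m : ℕ} (hm : m ≤ B) :
    gAuxD φ B pr (j + 1) m = ∑ i ∈ Finset.range (B + 1),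
      pr i * ∫ x, alphaD (gAuxD φ B pr j) (min (m + i) B) x ∂φ := by
  rw [gAuxD, Finset.sum_mul, ← Finset.Ico_add_one_right_eq_Icc,
    ← Finset.sum_range_add_sum_Ico _ (by omega : B - m ≤ B + 1)]
  congr 1
  · refine Finset.sum_congr rfl fun i hi => ?_
    rw [Finset.mem_range] at hi
    rw [show min (m + i) B = i + m by omega]
  · refine Finset.sum_congr rfl fun i hi => ?_
    rw [Finset.mem_Ico] at hi
    rw [show min (m + i) B = B by omega]

lemma gAuxD_zero (hφ : ∀ᵐ x ∂φ, 0 ≤ x) (m : ℕ) :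
    gAuxD φ B pr 0 m = ∑ i ∈ Finset.range (B + 1),
      pr i * ∫ x, alphaD 0 (min (m + i) B) x ∂φ := by
  rw [gAuxD]
  refine Finset.sum_congr rfl fun i _ => congrArg (pr i * ·) (integral_congr_ae ?_)
  filter_upwards [hφ] with x hx
  rw [alphaD_zero hx, mul_comm]

lemma gammaSlotD_of_lt {n k : ℕ} (hk : n < k) : gammaSlotD n φ B pr k = 0 :=
  funext fun _ => if_neg (by omega)

lemma gammaSlotD_succ (hφ : ∀ᵐ x ∂φ, 0 ≤ x) {n k m : ℕ} (hk : k < n) (hm : m ≤ B) :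
    gammaSlotD n φ B pr (k + 1) m = ∑ i ∈ Finset.range (B + 1),
      pr i * ∫ x, alphaD (gammaSlotD n φ B pr (k + 1 + 1)) (min (m + i) B) x ∂φ := by
  rw [gammaSlotD, if_pos (show k + 1 ≤ n from hk)]
  rcases (by omega : n = k + 1 ∨ k + 2 ≤ n) with rfl | hkn
  -- at the last slot `γ_{n+1} = 0`, and `α` with zero continuation is `log (1 + m x)` on `x ≥ 0`
  · rw [gammaSlotD_of_lt (by omega), Nat.sub_self, gAuxD_zero hφ]
  · have : gammaSlotD n φ B pr (k + 1 + 1) = gAuxD φ B pr (n - (k + 2)) :=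
      funext fun _ => if_pos hkn
    rw [this, show n - (k + 1) = n - (k + 2) + 1 by omega, gAuxD_succ _ hm]

end Values

noncomputable def bellmanGap (n B : ℕ) (φ : Measure ℝ) (pr : ℕ → ℝ) (Earr : ℕ → Ω → ℕ)
    (h : ℕ → Ω → ℝ) (F : ℕ → Ω → ℕ) (k : ℕ) (ω : Ω) : ℝ :=
  alphaD (gammaSlotD n φ B pr (k + 1)) (avail B Earr F k ω) (h k ω)
    - (Real.log (1 + F k ω * h k ω)
      + gammaSlotD n φ B pr (k + 1) (avail B Earr F k ω - F k ω))

section Policies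

variable {μ : Measure Ω} {n B : ℕ} {pr : ℕ → ℝ} {φ : Measure ℝ} {Earr : ℕ → Ω → ℕ}
  {h : ℕ → Ω → ℝ} {F : ℕ → Ω → ℕ}

section

omit [MeasurableSpace Ω]

lemma bellmanGap_nonneg {k : ℕ} {ω : Ω} (hF : F k ω ≤ avail B Earr F k ω) :
    0 ≤ bellmanGap n B φ pr Earr h F k ω :=
  sub_nonneg.mpr (le_alphaD _ hF _)

lemma bellmanGap_eq_zero_of_isGreedy (hF : IsPolicy n B Earr h F)
    (hgreedy : IsGreedy n B φ pr Earr h F) {k : ℕ} (hk1 : 1 ≤ k) (hkn : k ≤ n) (ω : Ω) :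
    bellmanGap n B φ pr Earr h F k ω = 0 :=
  le_antisymm (sub_nonpos.mpr (alphaD_le _ _ _ (hgreedy k hk1 hkn ω)))
    (bellmanGap_nonneg (hF.1 k hk1 hkn ω))

lemma IsPolicy.le_bound (hF : IsPolicy n B Earr h F) {k : ℕ} (hk1 : 1 ≤ k) (hkn : k ≤ n)
    (ω : Ω) : F k ω ≤ B :=
  (hF.1 k hk1 hkn ω).trans (min_le_right _ _)

end

lemma IsPolicy.measurable (hF : IsPolicy n B Earr h F) (hEm : ∀ k, Measurable (Earr k))
    (hhm : ∀ k, Measurable (h k)) {k : ℕ} (hk1 : 1 ≤ k) (hkn : k ≤ n) : Measurable (F k) :=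
  (hF.2 k hk1 hkn).mono (hist_le hEm hhm k) le_rfl

lemma integral_log_add_integral_bellmanGap [IsFiniteMeasure μ] [IsFiniteMeasure φ]
    (hEm : ∀ k, Measurable (Earr k)) (hhm : ∀ k, Measurable (h k))
    (hindep : iIndepFun (m := fun _ : Fin n => (inferInstance : MeasurableSpace (ℕ × ℝ)))
      (fun k ω => (Earr (k.1 + 1) ω, h (k.1 + 1) ω)) μ)
    (hφ : ∀ᵐ x ∂φ, 0 ≤ x) (hint : Integrable (fun x => Real.log (1 + B * x)) φ)
    (hF : IsPolicy n B Earr h F) {k : ℕ} (hk : k < n)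
    (hEB : ∀ ω, Earr (k + 1) ω ≤ B) (hlaw : μ.map (h (k + 1)) = φ)
    (hpair : IndepFun (Earr (k + 1)) (h (k + 1)) μ)
    (hpr : ∀ i ≤ B, μ.real {ω | Earr (k + 1) ω = i} = pr i) :
    ∫ ω, Real.log (1 + F (k + 1) ω * h (k + 1) ω) ∂μ
        + ∫ ω, bellmanGap n B φ pr Earr h F (k + 1) ω ∂μ
      = ∫ ω, gammaSlotD n φ B pr (k + 1) (carry B Earr F k ω) ∂μ
        - ∫ ω, gammaSlotD n φ B pr (k + 1 + 1) (carry B Earr F (k + 1) ω) ∂μ := by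
  set γ := gammaSlotD n φ B pr (k + 1 + 1)
  have hc : ∀ j ≤ n, Measurable (carry B Earr F j) := fun j hj =>
    (measurable_carry_hist hF.2 j hj).mono (hist_le hEm hhm j) le_rfl
  have hlog : Integrable (fun ω => Real.log (1 + F (k + 1) ω * h (k + 1) ω)) μ :=
    integrable_log_one_add_mul_comp (hF.measurable hEm hhm le_add_self hk)
      (hF.le_bound le_add_self hk) (hhm _) hlaw hφ hint
  have hα : Integrable (fun ω => alphaD γ (avail B Earr F (k + 1) ω) (h (k + 1) ω)) μ :=
    integrable_comp_of_le (G := fun u ω => alphaD γ u (h (k + 1) ω))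
      (((hc k hk.le).add (hEm _)).min measurable_const) (fun _ => min_le_right _ _) fun _ hu =>
        (hlaw ▸ integrable_alphaD hφ hint γ hu).comp_measurable (hhm _)
  have hγ : Integrable (fun ω => γ (carry B Earr F (k + 1) ω)) μ :=
    integrable_comp_of_le (G := fun m _ => γ m) (hc (k + 1) hk) (carry_le B F (k + 1))
      fun _ _ => integrable_const _
  have hbellman : ∫ ω, alphaD γ (avail B Earr F (k + 1) ω) (h (k + 1) ω) ∂μ
      = ∫ ω, gammaSlotD n φ B pr (k + 1) (carry B Earr F k ω) ∂μ := by
    refine (integral_comp_history_slot (G := fun m i x => alphaD γ (min (m + i) B) x) hEm hhm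
      hindep hk hEB hlaw hpair hpr (measurable_carry_hist hF.2 k hk.le) (carry_le B F k)
      (fun _ _ => measurable_alphaD _ _)
      fun _ _ => integrable_alphaD hφ hint _ (min_le_right _ _)).trans ?_
    exact integral_congr_ae (ae_of_all _ fun ω => (gammaSlotD_succ hφ hk (carry_le B F k ω)).symm)
  have hgap : Integrable (bellmanGap n B φ pr Earr h F (k + 1)) μ := hα.sub (hlog.add hγ)
  rw [← integral_add hlog hgap, ← hbellman, ← integral_sub hα hγ]
  refine integral_congr_ae (ae_of_all _ fun ω => ?_)
  change _ + (alphaD γ _ _ - (_ + γ (carry B Earr F (k + 1) ω))) = _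
  ring

theorem payoff_add_sum_integral_bellmanGap [IsProbabilityMeasure μ] [IsFiniteMeasure φ]
    (hEm : ∀ k, Measurable (Earr k)) (hhm : ∀ k, Measurable (h k))
    (hindep : iIndepFun (m := fun _ : Fin n => (inferInstance : MeasurableSpace (ℕ × ℝ)))
      (fun k ω => (Earr (k.1 + 1) ω, h (k.1 + 1) ω)) μ)
    (hφ : ∀ᵐ x ∂φ, 0 ≤ x) (hint : Integrable (fun x => Real.log (1 + B * x)) φ)
    (hEB : ∀ k ω, Earr k ω ≤ B) (hlaw : ∀ k, 1 ≤ k → k ≤ n → μ.map (h k) = φ)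
    (hpair : ∀ k, 1 ≤ k → k ≤ n → IndepFun (Earr k) (h k) μ)
    (hpr : ∀ k, 1 ≤ k → k ≤ n → ∀ i ≤ B, μ.real {ω | Earr k ω = i} = pr i)
    (hF : IsPolicy n B Earr h F) :
    payoff μ n h F + ∑ k ∈ Finset.range n, ∫ ω, bellmanGap n B φ pr Earr h F (k + 1) ω ∂μ
      = gammaSlotD n φ B pr 1 0 := by
  let V : ℕ → ℝ := fun k => ∫ ω, gammaSlotD n φ B pr (k + 1) (carry B Earr F k ω) ∂μ
  have hlog : ∀ k ∈ Finset.Icc 1 n, Integrable (fun ω => Real.log (1 + F k ω * h k ω)) μ :=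
    fun k hk => by
      obtain ⟨hk1, hkn⟩ := Finset.mem_Icc.mp hk
      exact integrable_log_one_add_mul_comp (hF.measurable hEm hhm hk1 hkn)
        (hF.le_bound hk1 hkn) (hhm k) (hlaw k hk1 hkn) hφ hint
  calc payoff μ n h F + ∑ k ∈ Finset.range n, ∫ ω, bellmanGap n B φ pr Earr h F (k + 1) ω ∂μ
      = ∑ k ∈ Finset.range n, (∫ ω, Real.log (1 + F (k + 1) ω * h (k + 1) ω) ∂μ
          + ∫ ω, bellmanGap n B φ pr Earr h F (k + 1) ω ∂μ) := by
        rw [Finset.sum_add_distrib, payoff, integral_finsetSum _ hlog,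
          ← Finset.Ico_add_one_right_eq_Icc, Finset.sum_Ico_eq_sum_range, Nat.add_sub_cancel]
        simp_rw [add_comm 1]
    _ = ∑ k ∈ Finset.range n, (V k - V (k + 1)) := Finset.sum_congr rfl fun k hk => by
        have hkn : k < n := Finset.mem_range.mp hk
        exact integral_log_add_integral_bellmanGap hEm hhm hindep hφ hint hF hkn (hEB _)
          (hlaw _ le_add_self hkn) (hpair _ le_add_self hkn) (hpr _ le_add_self hkn)
    _ = gammaSlotD n φ B pr 1 0 := by
        rw [Finset.sum_range_sub']
        simp [V, carry, gammaSlotD_of_lt (Nat.lt_succ_self n)]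

end Policies

-- The greedy choice at a slot depends on the carry left by the earlier greedy choices, so the
-- carry is defined first.
noncomputable def greedyCarry (n B : ℕ) (φ : Measure ℝ) (pr : ℕ → ℝ) (Earr : ℕ → Ω → ℕ)
    (h : ℕ → Ω → ℝ) : ℕ → Ω → ℕ
  | 0 => fun _ => 0
  | k + 1 => fun ω =>
      min (greedyCarry n B φ pr Earr h k ω + Earr (k + 1) ω) B
        - bestChoice (gammaSlotD n φ B pr (k + 1 + 1))
            (min (greedyCarry n B φ pr Earr h k ω + Earr (k + 1) ω) B, h (k + 1) ω)

noncomputable def greedyPolicy (n B : ℕ) (φ : Measure ℝ) (pr : ℕ → ℝ) (Earr : ℕ → Ω → ℕ)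
    (h : ℕ → Ω → ℝ) (k : ℕ) (ω : Ω) : ℕ :=
  bestChoice (gammaSlotD n φ B pr (k + 1))
    (min (greedyCarry n B φ pr Earr h (k - 1) ω + Earr k ω) B, h k ω)

section Greedy

variable {n B : ℕ} {pr : ℕ → ℝ} {φ : Measure ℝ} {Earr : ℕ → Ω → ℕ} {h : ℕ → Ω → ℝ}

omit [MeasurableSpace Ω]

lemma carry_greedyPolicy (k : ℕ) :
    carry B Earr (greedyPolicy n B φ pr Earr h) k = greedyCarry n B φ pr Earr h k := by
  induction k with
  | zero => rfl
  | succ k ih => funext ω; simp only [carry, ih]; rfl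

lemma greedyPolicy_eq (k : ℕ) (ω : Ω) :
    greedyPolicy n B φ pr Earr h k ω = bestChoice (gammaSlotD n φ B pr (k + 1))
      (avail B Earr (greedyPolicy n B φ pr Earr h) k ω, h k ω) := by
  rw [avail, carry_greedyPolicy]
  rfl

lemma measurable_greedyPolicy_succ {k : ℕ}
    (hc : Measurable[hist Earr h k] (greedyCarry n B φ pr Earr h k)) :
    Measurable[hist Earr h (k + 1)] (greedyPolicy n B φ pr Earr h (k + 1)) :=
  (measurable_bestChoice _).comp
    ((measurable_min_add_earr_hist hc).prodMk (measurable_h_hist le_add_self le_rfl))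

lemma measurable_greedyCarry : ∀ k, Measurable[hist Earr h k] (greedyCarry n B φ pr Earr h k)
  | 0 => measurable_const
  | k + 1 => (measurable_min_add_earr_hist (measurable_greedyCarry k)).sub
      (measurable_greedyPolicy_succ (measurable_greedyCarry k))

lemma greedyPolicy_isPolicy : IsPolicy n B Earr h (greedyPolicy n B φ pr Earr h) := by
  refine ⟨fun k _ _ ω => (greedyPolicy_eq k ω).trans_le (bestChoice_le _ _), fun k hk1 _ => ?_⟩
  obtain ⟨k, rfl⟩ : ∃ j, k = j + 1 := ⟨k - 1, by omega⟩
  exact measurable_greedyPolicy_succ (measurable_greedyCarry k)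

lemma greedyPolicy_isGreedy : IsGreedy n B φ pr Earr h (greedyPolicy n B φ pr Earr h) :=
  fun k _ _ ω j hj => by
    rw [greedyPolicy_eq]
    exact bestChoice_max _ (avail B Earr (greedyPolicy n B φ pr Earr h) k ω, h k ω) j hj

end Greedy

theorem optimal_value_eq_gamma_one_zero_general
    (μ : Measure Ω) [IsProbabilityMeasure μ]
    (n B : ℕ) (hn : 1 ≤ n)
    (pr : ℕ → ℝ) (hpr0 : ∀ i, 0 ≤ pr i)
    (φ : Measure ℝ) [IsProbabilityMeasure φ]
    (h : ℕ → Ω → ℝ) (Earr : ℕ → Ω → ℕ)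
    (hhm : ∀ k, Measurable (h k)) (hEm : ∀ k, Measurable (Earr k))
    (hlaw : ∀ k, 1 ≤ k → k ≤ n → Measure.map (h k) μ = φ)
    (hpos : ∀ k ω, 0 ≤ h k ω)
    (hint : Integrable (fun x => Real.log (1 + (B : ℝ) * x)) φ)
    (hEB : ∀ k ω, Earr k ω ≤ B)
    (hEpr : ∀ k, 1 ≤ k → k ≤ n → ∀ i, i ≤ B →
      μ {ω | Earr k ω = i} = ENNReal.ofReal (pr i))
    (hindep : iIndepFun (m := fun _ : Fin n => (inferInstance : MeasurableSpace (ℕ × ℝ)))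
      (fun k ω => (Earr (k.1 + 1) ω, h (k.1 + 1) ω)) μ)
    (hpair : ∀ k, 1 ≤ k → k ≤ n → IndepFun (Earr k) (h k) μ) :
    sSup {y : ℝ | ∃ F : ℕ → Ω → ℕ, IsPolicy n B Earr h F ∧ y = payoff μ n h F}
      = gammaSlotD n φ B pr 1 0 := by
  have hφ : ∀ᵐ x ∂φ, 0 ≤ x := by
    rw [← hlaw 1 le_rfl hn]
    exact (ae_map_iff (hhm 1).aemeasurable measurableSet_Ici).mpr (ae_of_all _ (hpos 1))
  have hpr : ∀ k, 1 ≤ k → k ≤ n → ∀ i ≤ B, μ.real {ω | Earr k ω = i} = pr i :=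
    fun k hk1 hkn i hi => by
      rw [measureReal_def, hEpr k hk1 hkn i hi, ENNReal.toReal_ofReal (hpr0 i)]
  have hvalue := fun F (hF : IsPolicy n B Earr h F) =>
    payoff_add_sum_integral_bellmanGap hEm hhm hindep hφ hint hEB hlaw hpair hpr hF
  have hgreedy : IsPolicy n B Earr h (greedyPolicy n B φ pr Earr h) := greedyPolicy_isPolicy
  refine IsGreatest.csSup_eq ⟨⟨_, hgreedy, ?_⟩, ?_⟩
  · rw [← hvalue _ hgreedy, Finset.sum_eq_zero, add_zero]
    intro k hk
    simp [bellmanGap_eq_zero_of_isGreedy hgreedy greedyPolicy_isGreedy le_add_self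
      (Finset.mem_range.mp hk)]
  · rintro _ ⟨F, hF, rfl⟩
    rw [← hvalue F hF]
    exact le_add_of_nonneg_right (Finset.sum_nonneg fun k hk => integral_nonneg fun ω =>
      bellmanGap_nonneg (hF.1 (k + 1) le_add_self (Finset.mem_range.mp hk) ω))

/-- The optimal expected total payoff (the supremum of `P(F)` over admissible
policies `F`) equals `γ_1^0`. -/
theorem optimal_value_eq_gamma_one_zero
    (μ : Measure Ω) [IsProbabilityMeasure μ]
    (n B : ℕ) (hn : 1 ≤ n) (hB : 1 ≤ B)
    (pr : ℕ → ℝ) (hpr0 : ∀ i, 0 ≤ pr i)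
    (hprsum : ∑ i ∈ Finset.range (B + 1), pr i = 1)
    (φ : Measure ℝ) [IsProbabilityMeasure φ]
    (h : ℕ → Ω → ℝ) (Earr : ℕ → Ω → ℕ)
    (hhm : ∀ k, Measurable (h k)) (hEm : ∀ k, Measurable (Earr k))
    (hlaw : ∀ k, 1 ≤ k → k ≤ n → Measure.map (h k) μ = φ)
    (hpos : ∀ k ω, 0 ≤ h k ω)
    (hint : Integrable (fun x => Real.log (1 + (B : ℝ) * x)) φ)
    (hEB : ∀ k ω, Earr k ω ≤ B)
    (hEpr : ∀ k, 1 ≤ k → k ≤ n → ∀ i, i ≤ B →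
      μ {ω | Earr k ω = i} = ENNReal.ofReal (pr i))
    (hindep : iIndepFun (m := fun _ : Fin n => (inferInstance : MeasurableSpace (ℕ × ℝ)))
      (fun k ω => (Earr (k.1 + 1) ω, h (k.1 + 1) ω)) μ)
    (hpair : ∀ k, 1 ≤ k → k ≤ n → IndepFun (Earr k) (h k) μ) :
    sSup {y : ℝ | ∃ F : ℕ → Ω → ℕ, IsPolicy n B Earr h F ∧ y = payoff μ n h F}
      = gammaSlotD n φ B pr 1 0 :=
  optimal_value_eq_gamma_one_zero_general μ n B hn pr hpr0 φ h Earr hhm hEm hlaw hpos hint hEB hEpr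
    hindep hpair

end EHDiscrete
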